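/- For every x > 0, log x − ψ(x) − 1/(2x) ≤ 1/(12x²), where ψ is the digamma function. -/

import Mathlib

/-!
For `E(x) = ψ(x) - log x + 1/(2x) + 1/(12x²)` and `ψ(x+1) = ψ(x) + 1/x`,
`E(x) - E(x+1)` is `log(1 + 1/x)` minus a rational function of `x`, and the first two terms
`2(t + t³/3)` of the series `log(1 + 1/x) = 2 artanh t`, `t = 1/(2x+1)`, already dominate that
rational function, so `E` decreases along `x, x+1, x+2, …`. Convexity of `log Γ` gives
`ψ(x+1) ≥ log x`, hence `E(x+1) ≥ -1/x`, so `E(x) ≥ E(x+n+1) ≥ -1/(x+n) → 0`.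
-/

open Filter Topology Real

/-- The digamma function `ψ(x) = d/dx log Γ(x)`. -/
noncomputable def digamma (x : ℝ) : ℝ := deriv (fun y => Real.log (Real.Gamma y)) x

section LogGamma

variable {x : ℝ}

lemma differentiableAt_log_Gamma (hx : 0 < x) :
    DifferentiableAt ℝ (fun y => log (Gamma y)) x :=
  (differentiableAt_Gamma fun m => ((neg_nonpos.mpr m.cast_nonneg).trans_lt hx).ne').log
    (Gamma_pos_of_pos hx).ne'

lemma log_Gamma_add_one (hx : 0 < x) : log (Gamma (x + 1)) = log (Gamma x) + log x := by
  rw [Gamma_add_one hx.ne', log_mul hx.ne' (Gamma_pos_of_pos hx).ne', add_comm]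

lemma slope_log_Gamma_add_one (hx : 0 < x) : slope (log ∘ Gamma) x (x + 1) = log x := by
  rw [slope_def_field, add_sub_cancel_left, div_one, Function.comp_apply, Function.comp_apply,
    log_Gamma_add_one hx, add_sub_cancel_left]

lemma digamma_add_one (hx : 0 < x) : digamma (x + 1) = digamma x + x⁻¹ := by
  rw [digamma, digamma, ← deriv_comp_add_const, ← deriv_log,
    ← deriv_add (differentiableAt_log_Gamma hx) (differentiableAt_log hx.ne')]
  refine EventuallyEq.deriv_eq ?_
  filter_upwards [eventually_gt_nhds hx] with y hy using log_Gamma_add_one hy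

lemma log_le_digamma_add_one (hx : 0 < x) : log x ≤ digamma (x + 1) :=
  slope_log_Gamma_add_one hx ▸ convexOn_log_Gamma.slope_le_deriv hx (show 0 < x + 1 by positivity)
    (lt_add_one x) (differentiableAt_log_Gamma (by positivity))

end LogGamma

lemma two_div_add_le_log_add_one_sub_log {x : ℝ} (hx : 0 < x) :
    2 / (2 * x + 1) + 2 / (3 * (2 * x + 1) ^ 3) ≤ log (x + 1) - log x := by
  set t := 1 / (2 * x + 1) with ht
  have ht0 : 0 ≤ t := by positivity
  have ht1 : t < 1 := by rw [ht, div_lt_one (by positivity)]; linarith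
  have hratio : (1 + t) / (1 - t) = (x + 1) / x := by
    rw [ht]
    field_simp
    ring
  have h := sum_range_le_log_div ht0 ht1 2
  rw [hratio, log_div (by positivity) hx.ne', Finset.sum_range_succ, Finset.sum_range_one] at h
  have hseries : 2 / (2 * x + 1) + 2 / (3 * (2 * x + 1) ^ 3) = 2 * (t + t ^ 3 / 3) := by
    rw [ht]
    field_simp
  norm_num at h
  linarith

noncomputable def digammaError (x : ℝ) : ℝ :=
  digamma x - log x + 1 / (2 * x) + 1 / (12 * x ^ 2)

section DigammaError

variable {x : ℝ}

lemma digammaError_add_one_le (hx : 0 < x) : digammaError (x + 1) ≤ digammaError x := by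
  have hlog := two_div_add_le_log_add_one_sub_log hx
  have hgap : 2 / (2 * x + 1) + 2 / (3 * (2 * x + 1) ^ 3) -
      (x⁻¹ + 1 / (2 * (x + 1)) + 1 / (12 * (x + 1) ^ 2) - 1 / (2 * x) - 1 / (12 * x ^ 2)) =
      (2 * x ^ 2 + 2 * x + 1) / (12 * (2 * x + 1) ^ 3 * x ^ 2 * (x + 1) ^ 2) := by
    field_simp
    ring
  have hgap_pos : 0 < (2 * x ^ 2 + 2 * x + 1) / (12 * (2 * x + 1) ^ 3 * x ^ 2 * (x + 1) ^ 2) := by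
    positivity
  rw [digammaError, digammaError, digamma_add_one hx]
  linarith

lemma neg_inv_le_digammaError_add_one (hx : 0 < x) : -x⁻¹ ≤ digammaError (x + 1) := by
  have hψ := log_le_digamma_add_one hx
  have hlog : log (x + 1) - log x ≤ x⁻¹ := by
    have h := log_le_sub_one_of_pos (x := (x + 1) / x) (by positivity)
    rw [log_div (by positivity) hx.ne', add_div, div_self hx.ne', one_div] at h
    linarith
  have h₁ : 0 < 1 / (2 * (x + 1)) := by positivity
  have h₂ : 0 < 1 / (12 * (x + 1) ^ 2) := by positivity
  rw [digammaError]
  linarith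

lemma digammaError_nonneg (hx : 0 < x) : 0 ≤ digammaError x := by
  have hanti : Antitone fun n : ℕ => digammaError (x + n) :=
    antitone_nat_of_succ_le fun n => by
      simpa only [Nat.cast_succ, add_assoc] using digammaError_add_one_le (x := x + n) (by positivity)
  have hlower (n : ℕ) : -(x + n)⁻¹ ≤ digammaError x :=
    calc -(x + n)⁻¹ ≤ digammaError (x + (n + 1 : ℕ)) := by
          simpa only [Nat.cast_succ, add_assoc] using
            neg_inv_le_digammaError_add_one (x := x + n) (by positivity)
      _ ≤ digammaError (x + (0 : ℕ)) := hanti (Nat.zero_le _)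
      _ = digammaError x := by rw [Nat.cast_zero, add_zero]
  have hlim : Tendsto (fun n : ℕ => -(x + n)⁻¹) atTop (𝓝 0) := by
    simpa using (tendsto_atTop_add_const_left _ x tendsto_natCast_atTop_atTop).inv_tendsto_atTop.neg
  exact le_of_tendsto' hlim hlower

end DigammaError

theorem stmt3 :
    ∀ x : ℝ, 0 < x →
      Real.log x - digamma x - 1 / (2 * x) ≤ 1 / (12 * x ^ 2) := by
  intro x hx
  have h := digammaError_nonneg hx
  rw [digammaError] at h
  linarith
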